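/- arXiv:2304.11647 — 2 statements merged into one kernel-verified Lean document; each statement's English description precedes it below -/
import Mathlib

section
/- Let M be a non-degenerate Orlicz function that does not satisfy the Δ₂ condition at zero, i.e. liminf_{t↓0} M(t)/M(2t) = 0. Then there exists a sequence (x^k) of elements of ℓ_M such that ‖x^k‖ → 1/2 as k → ∞ while σ_M(x^k) → 0 as k → ∞. -/
open Filter Topology

/-- `σ_M(x) = Σ_{n} M(|x_n|) ∈ [0,∞]`. -/
noncomputable def sigmaM (M : ℝ → ℝ) (x : ℕ → ℝ) : ENNReal :=
  ∑' n, ENNReal.ofReal (M |x n|)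

/-- Membership in the Orlicz sequence space `ℓ_M`: `x` is a bounded sequence with
`σ_M(x/ρ) < ∞` for some `ρ > 0`. -/
def MemLM (M : ℝ → ℝ) (x : ℕ → ℝ) : Prop :=
  (∃ A : ℝ, ∀ n, |x n| ≤ A) ∧ ∃ ρ > 0, sigmaM M (fun n => x n / ρ) ≠ ⊤

/-- The Luxemburg norm `‖x‖ = inf {ρ > 0 : σ_M(x/ρ) ≤ 1}`. -/
noncomputable def luxNorm (M : ℝ → ℝ) (x : ℕ → ℝ) : ℝ :=
  sInf {ρ : ℝ | 0 < ρ ∧ sigmaM M (fun n => x n / ρ) ≤ 1}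

/-- An Orlicz function: continuous, non-decreasing, convex on `[0,∞)`, `M(0) = 0` and
`M(t) → ∞` as `t → ∞`. -/
structure IsOrliczFunction (M : ℝ → ℝ) : Prop where
  continuousOn : ContinuousOn M (Set.Ici 0)
  monotoneOn : MonotoneOn M (Set.Ici 0)
  convexOn : ConvexOn ℝ (Set.Ici 0) M
  map_zero : M 0 = 0
  tendsto_atTop : Tendsto M atTop atTop

/-- `M` satisfies the `Δ₂` condition at zero: `liminf_{t↓0} M(t)/M(2t) > 0`. -/
def Delta2Zero (M : ℝ → ℝ) : Prop :=
  0 < liminf (fun t => M t / M (2 * t)) (𝓝[>] (0 : ℝ))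

/-- `g_a(x) = Σ_n a_n M(|x_n|)`. -/
noncomputable def gA (M : ℝ → ℝ) (a : ℕ → ℝ) (x : ℕ → ℝ) : ℝ :=
  ∑' n, a n * M |x n|

section Aux

variable {M : ℝ → ℝ}

lemma convex_scale (hM : IsOrliczFunction M) {s c : ℝ} (hs : 0 ≤ s) (hc : 1 ≤ c) :
    c * M s ≤ M (c * s) := by
  have hc0 : (0:ℝ) < c := lt_of_lt_of_le one_pos hc
  have ha : (0:ℝ) ≤ 1/c := by positivity
  have hb : (0:ℝ) ≤ 1 - 1/c := by
    have : 1/c ≤ 1 := by rw [div_le_one hc0]; exact hc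
    linarith
  have hmem : c * s ∈ Set.Ici (0:ℝ) := Set.mem_Ici.mpr (by positivity)
  have h0 : (0:ℝ) ∈ Set.Ici (0:ℝ) := Set.self_mem_Ici
  have key := hM.convexOn.2 hmem h0 ha hb (by ring)
  have harg : (1/c) • (c*s) + (1 - 1/c) • (0:ℝ) = s := by
    rw [smul_eq_mul, smul_eq_mul, mul_zero, add_zero]
    field_simp
  rw [harg, hM.map_zero, smul_eq_mul, smul_eq_mul, mul_zero, add_zero] at key
  calc c * M s ≤ c * ((1/c) * M (c*s)) := by
        exact mul_le_mul_of_nonneg_left key (le_of_lt hc0)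
    _ = M (c*s) := by field_simp

lemma M_nonneg (hM : IsOrliczFunction M) {s : ℝ} (hs : 0 ≤ s) : 0 ≤ M s := by
  have := hM.monotoneOn (Set.self_mem_Ici) hs hs
  rwa [hM.map_zero] at this

lemma sigmaM_indicator (hM : IsOrliczFunction M) {t : ℝ} (ht : 0 ≤ t) (N : ℕ) :
    sigmaM M (fun n => if n < N then t else 0) = (N : ENNReal) * ENNReal.ofReal (M t) := by
  unfold sigmaM
  rw [tsum_eq_sum (s := Finset.range N) (by
    intro n hn
    rw [Finset.mem_range] at hn
    simp [hn, hM.map_zero])]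
  have hcg : ∀ n ∈ Finset.range N,
      ENNReal.ofReal (M |if n < N then t else 0|) = ENNReal.ofReal (M t) := by
    intro n hn
    rw [Finset.mem_range] at hn
    simp [hn, abs_of_nonneg ht]
  rw [Finset.sum_congr rfl hcg, Finset.sum_const, Finset.card_range, nsmul_eq_mul]

end Aux

/-- If a non-degenerate Orlicz function `M` fails the `Δ₂` condition at zero, i.e.
`liminf_{t↓0} M(t)/M(2t) = 0`, then there is a sequence `(x^k) ⊆ ℓ_M` with
`‖x^k‖ → 1/2` while `σ_M(x^k) → 0`. -/
theorem stmt4 (M : ℝ → ℝ) (hM : IsOrliczFunction M) (hnd : ∀ t > (0 : ℝ), 0 < M t)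
    (hfail : liminf (fun t => M t / M (2 * t)) (𝓝[>] (0 : ℝ)) = 0) :
    ∃ x : ℕ → ℕ → ℝ, (∀ k, MemLM M (x k)) ∧
      Tendsto (fun k => luxNorm M (x k)) atTop (𝓝 (1 / 2)) ∧
      Tendsto (fun k => sigmaM M (x k)) atTop (𝓝 0) := by
  -- M(2t) → 0 as t → 0+
  have hM2 : Tendsto (fun t : ℝ => M (2 * t)) (𝓝[>] (0:ℝ)) (𝓝 0) := by
    have hcw : Tendsto M (𝓝[Set.Ici 0] (0:ℝ)) (𝓝 0) := by
      have := (hM.continuousOn 0 Set.self_mem_Ici)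
      rwa [ContinuousWithinAt, hM.map_zero] at this
    have h2 : Tendsto (fun t : ℝ => 2 * t) (𝓝[>] (0:ℝ)) (𝓝[Set.Ici 0] (0:ℝ)) := by
      apply tendsto_nhdsWithin_of_tendsto_nhds_of_eventually_within
      · have : Tendsto (fun t : ℝ => 2 * t) (𝓝 (0:ℝ)) (𝓝 (2 * 0)) :=
          (continuous_const.mul continuous_id).tendsto 0
        simpa using this.mono_left nhdsWithin_le_nhds
      · filter_upwards [self_mem_nhdsWithin] with t ht
        have h : (0:ℝ) < t := ht
        exact Set.mem_Ici.mpr (by linarith)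
    exact hcw.comp h2
  -- cobounded
  have hcob : IsCoboundedUnder (· ≥ ·) (𝓝[>] (0:ℝ)) (fun t => M t / M (2 * t)) := by
    have hev : ∀ᶠ u in 𝓝[>] (0:ℝ), M u / M (2 * u) ≤ (1:ℝ) := by
      filter_upwards [self_mem_nhdsWithin] with u hu
      have hu0 : (0:ℝ) < u := hu
      have h2t : 0 < M (2 * u) := hnd _ (by linarith)
      rw [div_le_one h2t]
      exact hM.monotoneOn (Set.mem_Ici.mpr (le_of_lt hu0))
        (Set.mem_Ici.mpr (by linarith)) (by linarith)
    exact isCoboundedUnder_ge_of_eventually_le _ hev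
  -- selection of t_k
  have hsel : ∀ k : ℕ, ∃ t : ℝ, 0 < t ∧ M t / M (2 * t) < 1 / (k + 1) ∧
      M (2 * t) < 1 / (k + 1) := by
    intro k
    have hεpos : (0:ℝ) < 1 / (k + 1) := by positivity
    have hfreq : ∃ᶠ t in 𝓝[>] (0:ℝ), M t / M (2 * t) < 1 / (k + 1) :=
      frequently_lt_of_liminf_lt hcob (by rw [hfail]; exact hεpos)
    have hev1 : ∀ᶠ t in 𝓝[>] (0:ℝ), (0:ℝ) < t := self_mem_nhdsWithin
    have hev2 : ∀ᶠ t in 𝓝[>] (0:ℝ), M (2 * t) < 1 / (k + 1) :=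
      hM2.eventually_lt_const hεpos
    obtain ⟨t, h1, h2, h3⟩ := (hfreq.and_eventually (hev1.and hev2)).exists
    exact ⟨t, h2, h1, h3⟩
  choose t ht0 htq hts using hsel
  -- basic facts
  have h2t0 : ∀ k, (0:ℝ) < 2 * t k := fun k => by have := ht0 k; linarith
  have hMpos : ∀ k, 0 < M (2 * t k) := fun k => hnd _ (h2t0 k)
  have hMt0 : ∀ k, 0 ≤ M (t k) := fun k => M_nonneg hM (le_of_lt (ht0 k))
  have hεlt1 : ∀ k, M (2 * t k) < 1 := fun k => lt_of_lt_of_le (hts k) (by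
    rw [div_le_one (show (0:ℝ) < (k:ℝ) + 1 by positivity)]
    linarith [Nat.cast_nonneg (α := ℝ) k])
  set N : ℕ → ℕ := fun k => ⌊1 / M (2 * t k)⌋₊ with hN
  have hN1 : ∀ k, 1 ≤ N k := by
    intro k
    apply Nat.le_floor
    rw [Nat.cast_one, le_div_iff₀ (hMpos k), one_mul]
    exact le_of_lt (hεlt1 k)

  have hNle : ∀ k, (N k : ℝ) * M (2 * t k) ≤ 1 := by
    intro k
    have := Nat.floor_le (le_of_lt (div_pos one_pos (hMpos k)))
    calc (N k : ℝ) * M (2 * t k) ≤ (1 / M (2 * t k)) * M (2 * t k) :=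
          mul_le_mul_of_nonneg_right this (le_of_lt (hMpos k))
      _ = 1 := one_div_mul_cancel (ne_of_gt (hMpos k))
  have hNgt : ∀ k, 1 - M (2 * t k) < (N k : ℝ) * M (2 * t k) := by
    intro k
    have := Nat.lt_floor_add_one (1 / M (2 * t k))
    have h2 : 1 / M (2 * t k) * M (2 * t k) < ((N k : ℝ) + 1) * M (2 * t k) :=
      mul_lt_mul_of_pos_right this (hMpos k)
    rw [div_mul_cancel₀ _ (ne_of_gt (hMpos k))] at h2
    nlinarith
  -- the sequence
  set x : ℕ → ℕ → ℝ := fun k n => if n < N k then t k else 0 with hx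
  -- sigma formula with scaling
  have hsig : ∀ k (ρ : ℝ), 0 < ρ →
      sigmaM M (fun n => x k n / ρ) = (N k : ENNReal) * ENNReal.ofReal (M (t k / ρ)) := by
    intro k ρ hρ
    have : (fun n => x k n / ρ) = fun n => if n < N k then t k / ρ else 0 := by
      funext n
      simp only [hx]
      split <;> simp
    rw [this]
    exact sigmaM_indicator hM (le_of_lt (div_pos (ht0 k) hρ)) (N k)
  have hsig1 : ∀ k, sigmaM M (x k) = (N k : ENNReal) * ENNReal.ofReal (M (t k)) := by
    intro k
    have := hsig k 1 one_pos
    simpa using this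
  -- ofReal products
  have hofm : ∀ k (s : ℝ), (N k : ENNReal) * ENNReal.ofReal (M s) =
      ENNReal.ofReal ((N k : ℝ) * M s) := by
    intro k s
    rw [ENNReal.ofReal_mul (by positivity), ENNReal.ofReal_natCast]
  -- half is in the norm set
  have hhalf : ∀ k, (1/2 : ℝ) ∈ {ρ : ℝ | 0 < ρ ∧ sigmaM M (fun n => x k n / ρ) ≤ 1} := by
    intro k
    refine ⟨by norm_num, ?_⟩
    rw [hsig k (1/2) (by norm_num)]
    have harg : t k / (1/2 : ℝ) = 2 * t k := by ring
    rw [harg, hofm]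
    calc ENNReal.ofReal ((N k : ℝ) * M (2 * t k)) ≤ ENNReal.ofReal 1 :=
          ENNReal.ofReal_le_ofReal (hNle k)
      _ = 1 := ENNReal.ofReal_one
  -- lower bound for elements of the norm set
  have hlb : ∀ k, ∀ ρ ∈ {ρ : ℝ | 0 < ρ ∧ sigmaM M (fun n => x k n / ρ) ≤ 1},
      (1 - M (2 * t k)) / 2 ≤ ρ := by
    intro k ρ ⟨hρ0, hρ1⟩
    by_contra hcon
    push_neg at hcon
    set ε := M (2 * t k) with hε
    have hε0 : 0 < ε := hMpos k
    have hε1 : ε < 1 := hεlt1 k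
    -- t k / ρ ≥ 2 t k / (1 - ε)
    have hge : 2 * t k / (1 - ε) ≤ t k / ρ := by
      rw [div_le_div_iff₀ (by linarith) hρ0]
      nlinarith [ht0 k]
    have hc1 : (1:ℝ) ≤ 1 / (1 - ε) := by
      rw [le_div_iff₀ (by linarith)]; linarith
    have hscale : (1 / (1 - ε)) * M (2 * t k) ≤ M ((1 / (1 - ε)) * (2 * t k)) :=
      convex_scale hM (le_of_lt (h2t0 k)) hc1
    have harg : (1 / (1 - ε)) * (2 * t k) = 2 * t k / (1 - ε) := by ring
    rw [harg] at hscale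
    have hmono : M (2 * t k / (1 - ε)) ≤ M (t k / ρ) := by
      apply hM.monotoneOn _ _ hge
      · have h1 := h2t0 k
        have h2 : (0:ℝ) < 1 - ε := by linarith
        exact Set.mem_Ici.mpr (le_of_lt (div_pos h1 h2))
      · exact Set.mem_Ici.mpr (le_of_lt (div_pos (ht0 k) hρ0))
    have hMtρ : ε / (1 - ε) ≤ M (t k / ρ) := by
      calc ε / (1 - ε) = (1 / (1 - ε)) * M (2 * t k) := by rw [hε]; ring
        _ ≤ M (2 * t k / (1 - ε)) := hscale
        _ ≤ M (t k / ρ) := hmono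
    have hkey : 1 < (N k : ℝ) * M (t k / ρ) := by
      have h1 : (1:ℝ) < (N k : ℝ) * ε / (1 - ε) := by
        rw [lt_div_iff₀ (by linarith)]
        linarith [hNgt k]
      calc (1:ℝ) < (N k : ℝ) * ε / (1 - ε) := h1
        _ = (N k : ℝ) * (ε / (1 - ε)) := by ring
        _ ≤ (N k : ℝ) * M (t k / ρ) :=
            mul_le_mul_of_nonneg_left hMtρ (Nat.cast_nonneg _)
    have : (1 : ENNReal) < sigmaM M (fun n => x k n / ρ) := by
      rw [hsig k ρ hρ0, hofm]
      rw [← ENNReal.ofReal_one]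
      exact (ENNReal.ofReal_lt_ofReal_iff (lt_trans one_pos hkey)).mpr hkey
    exact absurd hρ1 (not_le.mpr this)
  -- norm bounds
  have hnormle : ∀ k, luxNorm M (x k) ≤ 1/2 := fun k =>
    csInf_le ⟨0, fun ρ hρ => le_of_lt hρ.1⟩ (hhalf k)
  have hnormge : ∀ k, (1 - M (2 * t k)) / 2 ≤ luxNorm M (x k) := fun k =>
    le_csInf ⟨1/2, hhalf k⟩ (hlb k)
  -- ε_k → 0
  have hone : Tendsto (fun k : ℕ => 1 / ((k : ℝ) + 1)) atTop (𝓝 0) :=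
    tendsto_one_div_add_atTop_nhds_zero_nat
  have hεto : Tendsto (fun k => M (2 * t k)) atTop (𝓝 0) := by
    apply tendsto_of_tendsto_of_tendsto_of_le_of_le tendsto_const_nhds hone
    · intro k; exact le_of_lt (hMpos k)
    · intro k; exact le_of_lt (hts k)
  refine ⟨x, ?_, ?_, ?_⟩
  · -- membership
    intro k
    constructor
    · refine ⟨t k, fun n => ?_⟩
      simp only [hx]
      split
      · rw [abs_of_nonneg (le_of_lt (ht0 k))]
      · simp [le_of_lt (ht0 k)]
    · refine ⟨1/2, by norm_num, ?_⟩
      rw [hsig k (1/2) (by norm_num)]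
      exact ENNReal.mul_ne_top (ENNReal.natCast_ne_top _) ENNReal.ofReal_ne_top
  · -- norm tendsto
    have hto : Tendsto (fun k => (1 - M (2 * t k)) / 2) atTop (𝓝 (1/2)) := by
      have := (tendsto_const_nhds (x := (1:ℝ)) (f := atTop (α := ℕ))).sub hεto
      have h2 := this.div_const 2
      simpa using h2
    exact tendsto_of_tendsto_of_tendsto_of_le_of_le hto tendsto_const_nhds hnormge hnormle
  · -- sigma tendsto
    have hbound : ∀ k, sigmaM M (x k) ≤ ENNReal.ofReal (1 / ((k:ℝ) + 1)) := by
      intro k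
      rw [hsig1 k, hofm]
      apply ENNReal.ofReal_le_ofReal
      have h1 : M (t k) ≤ M (2 * t k) * (1 / ((k:ℝ) + 1)) := by
        have := htq k
        rw [div_lt_iff₀ (hMpos k)] at this
        linarith [this]
      calc (N k : ℝ) * M (t k) ≤ (N k : ℝ) * (M (2 * t k) * (1 / ((k:ℝ) + 1))) :=
            mul_le_mul_of_nonneg_left h1 (Nat.cast_nonneg _)
        _ = ((N k : ℝ) * M (2 * t k)) * (1 / ((k:ℝ) + 1)) := by ring
        _ ≤ 1 * (1 / ((k:ℝ) + 1)) :=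
            mul_le_mul_of_nonneg_right (hNle k) (by positivity)
        _ = 1 / ((k:ℝ) + 1) := one_mul _
    have hupper : Tendsto (fun k : ℕ => ENNReal.ofReal (1 / ((k:ℝ) + 1))) atTop (𝓝 0) := by
      rw [← ENNReal.ofReal_zero]
      exact ENNReal.tendsto_ofReal hone
    exact tendsto_of_tendsto_of_tendsto_of_le_of_le tendsto_const_nhds hupper
      (fun k => zero_le) hbound
end

section
/- Let M be a non-degenerate Orlicz function satisfying the Δ₂ condition at zero, and set ν(t) := sup{σ_M(x) : x ∈ ℓ_M, ‖x‖ ≤ t}. Then for every bounded real sequence a = (a_n) and every K > 0, the function g_a is real-valued on ℓ_M, it satisfies sup{|g_a(x)| : ‖x‖ ≤ K} ≤ ‖a‖_∞ · ν(K), and it is Lipschitz on the ball {x : ‖x‖ ≤ K} with |g_a(x) − g_a(y)| ≤ 2‖a‖_∞ · ν(K+1) · ‖x − y‖ for all x, y with ‖x‖ ≤ K and ‖y‖ ≤ K. -/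
open Filter Topology

/-- `ν(t) = sup {σ_M(x) : x ∈ ℓ_M, ‖x‖ ≤ t}`. -/
noncomputable def nuM (M : ℝ → ℝ) (t : ℝ) : ENNReal :=
  ⨆ x ∈ {y : ℕ → ℝ | MemLM M y ∧ luxNorm M y ≤ t}, sigmaM M x

section Aux

variable {M : ℝ → ℝ}

lemma orlicz_nonneg (hM : IsOrliczFunction M) {t : ℝ} (ht : 0 ≤ t) : 0 ≤ M t := by
  have h := hM.monotoneOn Set.self_mem_Ici (Set.mem_Ici.mpr ht) ht
  rwa [hM.map_zero] at h

lemma doubling_near_zero (hM : IsOrliczFunction M) (hnd : ∀ t > (0 : ℝ), 0 < M t)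
    (hΔ : Delta2Zero M) :
    ∃ c > (0 : ℝ), ∃ δ > (0 : ℝ), ∀ t, 0 < t → t < δ → M (2 * t) ≤ c * M t := by
  have hΔ' : 0 < liminf (fun t => M t / M (2 * t)) (𝓝[>] (0 : ℝ)) := hΔ
  set L := liminf (fun t => M t / M (2 * t)) (𝓝[>] (0 : ℝ)) with hL
  have hbdd : (𝓝[>] (0 : ℝ)).IsBoundedUnder (· ≥ ·) (fun t => M t / M (2 * t)) := by
    refine ⟨0, ?_⟩
    rw [eventually_map]
    filter_upwards [self_mem_nhdsWithin] with t ht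
    have ht' : (0:ℝ) < t := ht
    exact div_nonneg (orlicz_nonneg hM ht'.le) (orlicz_nonneg hM (by positivity))
  have hev : ∀ᶠ t in 𝓝[>] (0 : ℝ), L / 2 < M t / M (2 * t) :=
    eventually_lt_of_lt_liminf (half_lt_self hΔ') hbdd
  rw [eventually_nhdsWithin_iff, Metric.eventually_nhds_iff] at hev
  obtain ⟨δ, hδ, hev⟩ := hev
  refine ⟨2 / L, div_pos two_pos hΔ', δ, hδ, fun t ht htδ => ?_⟩
  have h1 : L / 2 < M t / M (2 * t) := by
    refine hev ?_ (Set.mem_Ioi.mpr ht)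
    rw [Real.dist_eq, sub_zero, abs_of_pos ht]; exact htδ
  have h2 : 0 < M (2 * t) := hnd _ (by positivity)
  rw [lt_div_iff₀ h2] at h1
  rw [div_mul_eq_mul_div, le_div_iff₀ hΔ']
  nlinarith

lemma doubling_on (hM : IsOrliczFunction M) (hnd : ∀ t > (0 : ℝ), 0 < M t)
    (hΔ : Delta2Zero M) (T : ℝ) (hT : 0 < T) :
    ∃ C > (0 : ℝ), ∀ t, 0 < t → t ≤ T → M (2 * t) ≤ C * M t := by
  obtain ⟨c, hc, δ, hδ, hdb⟩ := doubling_near_zero hM hnd hΔ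
  have hMδ : 0 < M (δ / 2) := hnd _ (by positivity)
  refine ⟨c + M (2 * T) / M (δ / 2), add_pos_of_pos_of_nonneg hc (div_nonneg (orlicz_nonneg hM (by positivity)) hMδ.le), fun t ht htT => ?_⟩
  rcases lt_or_ge t (δ / 2) with h | h
  · have h1 := hdb t ht (h.trans (by linarith))
    have h2 : 0 ≤ M (2 * T) / M (δ / 2) * M t :=
      mul_nonneg (div_nonneg (orlicz_nonneg hM (by positivity)) hMδ.le)
        (orlicz_nonneg hM ht.le)
    nlinarith
  · have h1 : M (2 * t) ≤ M (2 * T) :=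
      hM.monotoneOn (Set.mem_Ici.mpr (by positivity)) (Set.mem_Ici.mpr (by positivity))
        (by linarith)
    have h2 : M (δ / 2) ≤ M t :=
      hM.monotoneOn (Set.mem_Ici.mpr (by positivity)) (Set.mem_Ici.mpr ht.le) h
    have h3 : 0 ≤ c * M t := mul_nonneg hc.le (orlicz_nonneg hM ht.le)
    have h4 : M (2 * T) / M (δ / 2) * M (δ / 2) ≤ M (2 * T) / M (δ / 2) * M t :=
      mul_le_mul_of_nonneg_left h2
        (div_nonneg (orlicz_nonneg hM (by positivity)) hMδ.le)
    rw [div_mul_cancel₀ _ hMδ.ne'] at h4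
    nlinarith

lemma pow_doubling (hM : IsOrliczFunction M) (hnd : ∀ t > (0 : ℝ), 0 < M t)
    (hΔ : Delta2Zero M) (T : ℝ) (hT : 0 < T) (k : ℕ) :
    ∃ C > (0 : ℝ), ∀ t, 0 ≤ t → t ≤ T → M ((2 : ℝ) ^ k * t) ≤ C * M t := by
  induction k with
  | zero =>
    exact ⟨1, one_pos, fun t ht _ => by simp⟩
  | succ k ih =>
    obtain ⟨C, hC, hCb⟩ := ih
    obtain ⟨C₂, hC₂, hC₂b⟩ := doubling_on hM hnd hΔ ((2 : ℝ) ^ k * T) (by positivity)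
    refine ⟨C₂ * C, by positivity, fun t ht htT => ?_⟩
    rcases ht.eq_or_lt with h0 | h0
    · rw [← h0]
      simp [hM.map_zero]
    · have he : (2 : ℝ) ^ (k + 1) * t = 2 * ((2 : ℝ) ^ k * t) := by ring
      rw [he]
      calc M (2 * ((2 : ℝ) ^ k * t)) ≤ C₂ * M ((2 : ℝ) ^ k * t) :=
            hC₂b _ (by positivity) (by have := mul_le_mul_of_nonneg_left htT (by positivity : (0:ℝ) ≤ 2^k); linarith)
        _ ≤ C₂ * (C * M t) := by
            exact mul_le_mul_of_nonneg_left (hCb t ht htT) hC₂.le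
        _ = C₂ * C * M t := by ring

lemma scaling (hM : IsOrliczFunction M) (hnd : ∀ t > (0 : ℝ), 0 < M t)
    (hΔ : Delta2Zero M) (lam T : ℝ) (hlam : 0 ≤ lam) (hT : 0 < T) :
    ∃ C > (0 : ℝ), ∀ t, 0 ≤ t → t ≤ T → M (lam * t) ≤ C * M t := by
  obtain ⟨k, hk⟩ := pow_unbounded_of_one_lt lam (one_lt_two (α := ℝ))
  obtain ⟨C, hC, hCb⟩ := pow_doubling hM hnd hΔ T hT k
  refine ⟨C, hC, fun t ht htT => ?_⟩
  refine le_trans ?_ (hCb t ht htT)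
  exact hM.monotoneOn (Set.mem_Ici.mpr (by positivity)) (Set.mem_Ici.mpr (by positivity))
    (mul_le_mul_of_nonneg_right hk.le ht)

lemma sigmaM_le_of_forall {x y : ℕ → ℝ} (h : ∀ n, M |x n| ≤ M |y n|) :
    sigmaM M x ≤ sigmaM M y :=
  ENNReal.tsum_le_tsum fun n => ENNReal.ofReal_le_ofReal (h n)

lemma sigmaM_le_mul {x y : ℕ → ℝ} {C : ℝ} (hC : 0 ≤ C)
    (h : ∀ n, M |x n| ≤ C * M |y n|) :
    sigmaM M x ≤ ENNReal.ofReal C * sigmaM M y := by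
  rw [sigmaM, sigmaM, ← ENNReal.tsum_mul_left]
  refine ENNReal.tsum_le_tsum fun n => ?_
  rw [← ENNReal.ofReal_mul hC]
  exact ENNReal.ofReal_le_ofReal (h n)

lemma sigmaM_congr {x y : ℕ → ℝ} (h : ∀ n, |x n| = |y n|) :
    sigmaM M x = sigmaM M y :=
  tsum_congr fun n => by rw [h n]

lemma sigmaM_ne_top (hM : IsOrliczFunction M) (hnd : ∀ t > (0 : ℝ), 0 < M t)
    (hΔ : Delta2Zero M) {x : ℕ → ℝ} (hx : MemLM M x) : sigmaM M x ≠ ⊤ := by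
  obtain ⟨⟨A, hA⟩, ρ, hρ, hfin⟩ := hx
  have hA0 : 0 ≤ A := (abs_nonneg _).trans (hA 0)
  obtain ⟨C, hC, hCb⟩ := scaling hM hnd hΔ ρ ((A + 1) / ρ) hρ.le (by positivity)
  have hb : ∀ n, M |x n| ≤ C * M |x n / ρ| := by
    intro n
    have h1 : |x n / ρ| = |x n| / ρ := by rw [abs_div, abs_of_pos hρ]
    have h2 : |x n| / ρ ≤ (A + 1) / ρ := by gcongr; linarith [hA n]
    have h3 : ρ * (|x n| / ρ) = |x n| := by field_simp
    rw [h1]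
    calc M |x n| = M (ρ * (|x n| / ρ)) := by rw [h3]
      _ ≤ C * M (|x n| / ρ) := hCb _ (by positivity) h2
  have := (sigmaM_le_mul hC.le hb).trans_lt
    (ENNReal.mul_lt_top ENNReal.ofReal_lt_top (lt_top_iff_ne_top.mpr hfin))
  exact this.ne

lemma exists_threshold (hM : IsOrliczFunction M) : ∃ T > (0 : ℝ), 1 < M T := by
  obtain ⟨T, hT⟩ := (hM.tendsto_atTop.eventually_gt_atTop 1).exists_forall_of_atTop
  exact ⟨max T 1, lt_of_lt_of_le one_pos (le_max_right _ _), hT _ (le_max_left _ _)⟩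

lemma term_le_one {x : ℕ → ℝ} (hσ : sigmaM M x ≤ 1) (n : ℕ) : M |x n| ≤ 1 := by
  have h1 : ENNReal.ofReal (M |x n|) ≤ 1 := (ENNReal.le_tsum n).trans hσ
  exact ENNReal.ofReal_le_one.mp h1

lemma abs_le_of_sigma_le_one (hM : IsOrliczFunction M) {x : ℕ → ℝ} {T : ℝ}
    (hT : 0 < T) (hT1 : 1 < M T) (hσ : sigmaM M x ≤ 1) (n : ℕ) : |x n| ≤ T := by
  by_contra h
  push_neg at h
  have := hM.monotoneOn (Set.mem_Ici.mpr hT.le) (Set.mem_Ici.mpr (abs_nonneg _)) h.le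
  have := term_le_one hσ n
  linarith

lemma summable_M (hM : IsOrliczFunction M) {x : ℕ → ℝ} (hfin : sigmaM M x ≠ ⊤) :
    Summable fun n => M |x n| := by
  have h := ENNReal.summable_toReal hfin
  refine h.congr fun n => ?_
  exact ENNReal.toReal_ofReal (orlicz_nonneg hM (abs_nonneg _))

lemma tsum_M_eq (hM : IsOrliczFunction M) (x : ℕ → ℝ) :
    ∑' n, M |x n| = (sigmaM M x).toReal := by
  rw [sigmaM, ENNReal.tsum_toReal_eq fun n => ENNReal.ofReal_ne_top]
  exact tsum_congr fun n =>
    (ENNReal.toReal_ofReal (orlicz_nonneg hM (abs_nonneg _))).symm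

lemma lmSet_nonempty (hM : IsOrliczFunction M) {x : ℕ → ℝ} (hx : MemLM M x) :
    ∃ s, 0 < s ∧ sigmaM M (fun n => x n / s) ≤ 1 := by
  obtain ⟨⟨A, hA⟩, ρ, hρ, hfin⟩ := hx
  have hA0 : 0 ≤ A := (abs_nonneg _).trans (hA 0)
  set F : ℕ → ℝ := fun n => M |x n / ρ| with hF
  have hFs : Summable F := summable_M hM hfin
  have hFnn : ∀ n, 0 ≤ F n := fun n => orlicz_nonneg hM (abs_nonneg _)
  have htail : Tendsto (fun N => ∑' k, F (k + N)) atTop (𝓝 0) :=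
    _root_.tendsto_sum_nat_add F
  obtain ⟨N, hN⟩ := (htail.eventually_lt_const (by norm_num : (0:ℝ) < 1/2)).exists
  have hcont : Tendsto M (𝓝[Set.Ici 0] 0) (𝓝 0) := by
    have h := hM.continuousOn 0 Set.self_mem_Ici
    rw [ContinuousWithinAt, hM.map_zero] at h; exact h
  rw [Metric.tendsto_nhdsWithin_nhds] at hcont
  set ε : ℝ := 1 / (2 * ((N : ℝ) + 1)) with hε
  have hεpos : 0 < ε := by positivity
  obtain ⟨δ, hδ, hδb⟩ := hcont ε hεpos
  set s : ℝ := max ρ ((A + 1) / δ) with hs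
  have hspos : 0 < s := lt_max_of_lt_left hρ
  refine ⟨s, hspos, ?_⟩
  set G : ℕ → ℝ := fun n => M |x n / s| with hGdef
  have hG : ∀ n, |x n / s| = |x n| / s := fun n => by rw [abs_div, abs_of_pos hspos]
  have hGnn : ∀ n, 0 ≤ G n := fun n => orlicz_nonneg hM (abs_nonneg _)
  have hGF : ∀ n, G n ≤ F n := by
    intro n
    refine hM.monotoneOn (Set.mem_Ici.mpr (abs_nonneg _))
      (Set.mem_Ici.mpr (abs_nonneg _)) ?_
    rw [hG n, abs_div, abs_of_pos hρ]
    exact div_le_div_of_nonneg_left (abs_nonneg _) hρ (le_max_left _ _)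
  have hGs : Summable G := Summable.of_nonneg_of_le hGnn hGF hFs
  have hsmall : ∀ n, G n ≤ ε := by
    intro n
    have hAδ : 0 < (A + 1) / δ := by positivity
    have harg : |x n| / s < δ := by
      have h1 : |x n| / s ≤ A / s := by gcongr; exact hA n
      have h2 : A / s ≤ A / ((A + 1) / δ) := by
        gcongr
        exact le_max_right _ _
      have h3 : A / ((A + 1) / δ) = A * δ / (A + 1) := by
        rw [div_div_eq_mul_div]
      have h4 : A * δ / (A + 1) < δ := by
        rw [div_lt_iff₀ (by positivity)]
        nlinarith
      calc |x n| / s ≤ A / ((A + 1) / δ) := h1.trans h2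
        _ = A * δ / (A + 1) := h3
        _ < δ := h4
    have hmem : |x n| / s ∈ Set.Ici (0 : ℝ) := Set.mem_Ici.mpr (by positivity)
    have hd : dist (|x n| / s) 0 < δ := by
      rw [Real.dist_eq, sub_zero, abs_of_nonneg (by positivity)]; exact harg
    have := hδb hmem hd
    rw [Real.dist_eq, sub_zero,
      abs_of_nonneg (orlicz_nonneg hM (by positivity))] at this
    calc G n = M (|x n| / s) := by rw [hGdef]; simp only [hG n]
      _ ≤ ε := this.le
  have hsplit := Summable.sum_add_tsum_nat_add N hGs
  have htail_s : ∑' k, G (k + N) ≤ ∑' k, F (k + N) :=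
    Summable.tsum_le_tsum (fun k => hGF _) ((summable_nat_add_iff N).mpr hGs)
      ((summable_nat_add_iff N).mpr hFs)
  have hhead : ∑ i ∈ Finset.range N, G i ≤ (N : ℝ) * ε := by
    refine (Finset.sum_le_sum fun i _ => hsmall i).trans ?_
    rw [Finset.sum_const, Finset.card_range, nsmul_eq_mul]
  have hNε : (N : ℝ) * ε ≤ 1 / 2 := by
    rw [hε, mul_one_div, div_le_div_iff₀ (by positivity) (by norm_num)]
    nlinarith [Nat.cast_nonneg (α := ℝ) N]
  have hsum1 : ∑' n, G n ≤ 1 := by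
    rw [← hsplit]
    linarith
  rw [sigmaM]
  have heq : (∑' n, ENNReal.ofReal (G n)) = ENNReal.ofReal (∑' n, G n) :=
    (ENNReal.ofReal_tsum_of_nonneg hGnn hGs).symm
  calc (∑' n, ENNReal.ofReal (M |x n / s|)) = ENNReal.ofReal (∑' n, G n) := heq
    _ ≤ ENNReal.ofReal 1 := ENNReal.ofReal_le_ofReal hsum1
    _ = 1 := ENNReal.ofReal_one

lemma luxNorm_nonneg {x : ℕ → ℝ} : 0 ≤ luxNorm M x :=
  Real.sInf_nonneg fun ρ hρ => hρ.1.le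

lemma luxNorm_le_of_mem {x : ℕ → ℝ} {ρ : ℝ} (hρ : 0 < ρ)
    (h : sigmaM M (fun n => x n / ρ) ≤ 1) : luxNorm M x ≤ ρ :=
  csInf_le ⟨0, fun s hs => hs.1.le⟩ ⟨hρ, h⟩

lemma exists_mem_lt (hM : IsOrliczFunction M) {x : ℕ → ℝ} (hx : MemLM M x)
    {K ε : ℝ} (hnorm : luxNorm M x ≤ K) (hε : 0 < ε) :
    ∃ ρ, 0 < ρ ∧ ρ < K + ε ∧ sigmaM M (fun n => x n / ρ) ≤ 1 := by
  obtain ⟨s, hs, hσ⟩ := lmSet_nonempty hM hx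
  have hne : {ρ : ℝ | 0 < ρ ∧ sigmaM M (fun n => x n / ρ) ≤ 1}.Nonempty := ⟨s, hs, hσ⟩
  have hlt : sInf {ρ : ℝ | 0 < ρ ∧ sigmaM M (fun n => x n / ρ) ≤ 1} < K + ε :=
    lt_of_le_of_lt hnorm (by linarith)
  obtain ⟨ρ, hρmem, hρlt⟩ := exists_lt_of_csInf_lt hne hlt
  exact ⟨ρ, hρmem.1, hρlt, hρmem.2⟩

lemma sigmaM_le_nuM {x : ℕ → ℝ} {K : ℝ} (hx : MemLM M x) (hle : luxNorm M x ≤ K) :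
    sigmaM M x ≤ nuM M K :=
  le_iSup₂_of_le x (⟨hx, hle⟩ : x ∈ {y : ℕ → ℝ | MemLM M y ∧ luxNorm M y ≤ K}) le_rfl

lemma nuM_mono {K K' : ℝ} (h : K ≤ K') : nuM M K ≤ nuM M K' :=
  iSup₂_le fun x hx => le_iSup₂_of_le x ⟨hx.1, hx.2.trans h⟩ le_rfl

lemma nuM_ne_top (hM : IsOrliczFunction M) (hnd : ∀ t > (0 : ℝ), 0 < M t)
    (hΔ : Delta2Zero M) {K : ℝ} (hK : 0 < K) : nuM M K ≠ ⊤ := by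
  obtain ⟨T, hT, hT1⟩ := exists_threshold hM
  obtain ⟨C, hC, hCb⟩ := scaling hM hnd hΔ (K + 1) T (by positivity) hT
  have hbound : nuM M K ≤ ENNReal.ofReal C := by
    refine iSup₂_le fun x hx => ?_
    obtain ⟨ρ, hρ, hρle, hσ⟩ := exists_mem_lt hM hx.1 hx.2 one_pos
    have hterm : ∀ n, M |x n| ≤ C * M |x n / ρ| := by
      intro n
      have habs : |x n / ρ| = |x n| / ρ := by rw [abs_div, abs_of_pos hρ]
      have hTb : |x n / ρ| ≤ T := abs_le_of_sigma_le_one hM hT hT1 hσ n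
      have h3 : ρ * (|x n| / ρ) = |x n| := by field_simp
      rw [habs] at hTb
      have hd : (0:ℝ) ≤ |x n| / ρ := by positivity
      calc M |x n| = M (ρ * (|x n| / ρ)) := by rw [h3]
        _ ≤ M ((K + 1) * (|x n| / ρ)) := by
            refine hM.monotoneOn (Set.mem_Ici.mpr (by positivity))
              (Set.mem_Ici.mpr (by positivity)) ?_
            nlinarith
        _ ≤ C * M (|x n| / ρ) := hCb _ hd hTb
        _ = C * M |x n / ρ| := by rw [habs]
    calc sigmaM M x ≤ ENNReal.ofReal C * sigmaM M (fun n => x n / ρ) :=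
          sigmaM_le_mul hC.le hterm
      _ ≤ ENNReal.ofReal C * 1 := by gcongr
      _ = ENNReal.ofReal C := mul_one _
  exact (hbound.trans_lt ENNReal.ofReal_lt_top).ne

lemma sigma_combo (hM : IsOrliczFunction M) {u v : ℕ → ℝ} {ρ s : ℝ}
    (hρ : 0 < ρ) (hs : 0 < s) (hu : ∀ n, 0 ≤ u n) (hv : ∀ n, 0 ≤ v n) :
    sigmaM M (fun n => (u n + v n) / (ρ + s)) ≤
      ENNReal.ofReal (ρ / (ρ + s)) * sigmaM M (fun n => u n / ρ) +
      ENNReal.ofReal (s / (ρ + s)) * sigmaM M (fun n => v n / s) := by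
  have hρs : 0 < ρ + s := by linarith
  set a : ℝ := ρ / (ρ + s) with ha
  set b : ℝ := s / (ρ + s) with hb
  have ha0 : 0 ≤ a := by positivity
  have hb0 : 0 ≤ b := by positivity
  have hab : a + b = 1 := by rw [ha, hb]; field_simp
  have hterm : ∀ n, M |(u n + v n) / (ρ + s)| ≤ a * M |u n / ρ| + b * M |v n / s| := by
    intro n
    have h1 : |(u n + v n) / (ρ + s)| = (u n + v n) / (ρ + s) :=
      abs_of_nonneg (div_nonneg (add_nonneg (hu n) (hv n)) hρs.le)
    have h2 : |u n / ρ| = u n / ρ := abs_of_nonneg (div_nonneg (hu n) hρ.le)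
    have h3 : |v n / s| = v n / s := abs_of_nonneg (div_nonneg (hv n) hs.le)
    rw [h1, h2, h3]
    have hcomb := hM.convexOn.2 (Set.mem_Ici.mpr (div_nonneg (hu n) hρ.le))
      (Set.mem_Ici.mpr (div_nonneg (hv n) hs.le)) ha0 hb0 hab
    have heq : a • (u n / ρ) + b • (v n / s) = (u n + v n) / (ρ + s) := by
      rw [smul_eq_mul, smul_eq_mul, ha, hb]
      field_simp
    rw [heq] at hcomb
    simpa [smul_eq_mul] using hcomb
  calc sigmaM M (fun n => (u n + v n) / (ρ + s))
      ≤ ∑' n, (ENNReal.ofReal a * ENNReal.ofReal (M |u n / ρ|) +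
        ENNReal.ofReal b * ENNReal.ofReal (M |v n / s|)) := by
        refine ENNReal.tsum_le_tsum fun n => ?_
        rw [← ENNReal.ofReal_mul ha0, ← ENNReal.ofReal_mul hb0,
          ← ENNReal.ofReal_add (mul_nonneg ha0 (orlicz_nonneg hM (abs_nonneg _)))
            (mul_nonneg hb0 (orlicz_nonneg hM (abs_nonneg _)))]
        exact ENNReal.ofReal_le_ofReal (hterm n)
    _ = ENNReal.ofReal a * sigmaM M (fun n => u n / ρ) +
        ENNReal.ofReal b * sigmaM M (fun n => v n / s) := by
        rw [ENNReal.tsum_add, ENNReal.tsum_mul_left, ENNReal.tsum_mul_left]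
        rfl

lemma MemLM_sub (hM : IsOrliczFunction M) {x y : ℕ → ℝ}
    (hx : MemLM M x) (hy : MemLM M y) : MemLM M (fun n => x n - y n) := by
  obtain ⟨⟨Ax, hAx⟩, ρx, hρx, hfx⟩ := hx
  obtain ⟨⟨Ay, hAy⟩, ρy, hρy, hfy⟩ := hy
  refine ⟨⟨Ax + Ay, fun n => (abs_sub _ _).trans (add_le_add (hAx n) (hAy n))⟩,
    ρx + ρy, by linarith, ?_⟩
  have hcombo := sigma_combo hM hρx hρy (u := fun n => |x n|) (v := fun n => |y n|)
    (fun n => abs_nonneg _) (fun n => abs_nonneg _)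
  have hmono : sigmaM M (fun n => (x n - y n) / (ρx + ρy)) ≤
      sigmaM M (fun n => (|x n| + |y n|) / (ρx + ρy)) := by
    refine sigmaM_le_of_forall fun n => ?_
    refine hM.monotoneOn (Set.mem_Ici.mpr (abs_nonneg _))
      (Set.mem_Ici.mpr (abs_nonneg _)) ?_
    have h1 : |(|x n| + |y n|) / (ρx + ρy)| = (|x n| + |y n|) / (ρx + ρy) :=
      abs_of_nonneg (by positivity)
    rw [h1, abs_div, abs_of_pos (by linarith : (0:ℝ) < ρx + ρy)]
    gcongr
    exact abs_sub _ _
  have hcx : sigmaM M (fun n => |x n| / ρx) = sigmaM M (fun n => x n / ρx) :=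
    sigmaM_congr fun n => by rw [abs_div, abs_div, abs_abs]
  have hcy : sigmaM M (fun n => |y n| / ρy) = sigmaM M (fun n => y n / ρy) :=
    sigmaM_congr fun n => by rw [abs_div, abs_div, abs_abs]
  rw [hcx, hcy] at hcombo
  refine ne_top_of_le_ne_top ?_ (hmono.trans hcombo)
  exact ENNReal.add_ne_top.mpr
    ⟨ENNReal.mul_ne_top ENNReal.ofReal_ne_top hfx,
     ENNReal.mul_ne_top ENNReal.ofReal_ne_top hfy⟩

lemma eq_of_luxNorm_eq_zero (hM : IsOrliczFunction M) {w : ℕ → ℝ}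
    (hw : MemLM M w) (h0 : luxNorm M w ≤ 0) : ∀ n, w n = 0 := by
  obtain ⟨T, hT, hT1⟩ := exists_threshold hM
  intro n
  have hkey : ∀ ε > (0 : ℝ), |w n| ≤ T * ε := by
    intro ε hε
    obtain ⟨ρ, hρ, hρlt, hσ⟩ := exists_mem_lt hM hw (le_trans h0 le_rfl) hε
    have := abs_le_of_sigma_le_one hM hT hT1 hσ n
    rw [abs_div, abs_of_pos hρ, div_le_iff₀ hρ] at this
    calc |w n| ≤ T * ρ := this
      _ ≤ T * ε := by
          rw [zero_add] at hρlt
          exact mul_le_mul_of_nonneg_left hρlt.le hT.le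
  have : |w n| ≤ 0 := by
    by_contra h
    push_neg at h
    have h2 := hkey (|w n| / (2 * T)) (by positivity)
    have h3 : T * (|w n| / (2 * T)) = |w n| / 2 := by field_simp
    rw [h3] at h2
    linarith
  exact abs_eq_zero.mp (le_antisymm this (abs_nonneg _))

lemma conv_step (hM : IsOrliczFunction M) {u v θ : ℝ} (hv : 0 ≤ v) (hvu : v ≤ u)
    (hθ : 0 < θ) (hθ1 : θ ≤ 1) : M u - M v ≤ θ * M (v + (u - v) / θ) := by
  have hu : 0 ≤ u := hv.trans hvu
  have harg : 0 ≤ v + (u - v) / θ := add_nonneg hv (div_nonneg (by linarith) hθ.le)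
  have hcomb := hM.convexOn.2 (Set.mem_Ici.mpr hv) (Set.mem_Ici.mpr harg)
    (by linarith : (0:ℝ) ≤ 1 - θ) hθ.le (by ring)
  have heq : (1 - θ) • v + θ • (v + (u - v) / θ) = u := by
    rw [smul_eq_mul, smul_eq_mul]
    field_simp
    ring
  rw [heq, smul_eq_mul, smul_eq_mul] at hcomb
  nlinarith [mul_nonneg hθ.le (orlicz_nonneg hM hv)]

lemma z_facts (hM : IsOrliczFunction M) {y w : ℕ → ℝ} {K : ℝ}
    (hy : MemLM M y) (hw : MemLM M w) (hKy : luxNorm M y ≤ K) (hK : 0 ≤ K)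
    {d : ℝ} (hd : 0 < d) (hdw : luxNorm M w ≤ d) :
    MemLM M (fun n => |y n| + |w n| / d) ∧
    luxNorm M (fun n => |y n| + |w n| / d) ≤ K + 1 := by
  have key : ∀ ε > (0 : ℝ), ∃ ρ, 0 < ρ ∧ ρ ≤ K + 1 + ε ∧
      sigmaM M (fun n => (|y n| + |w n| / d) / ρ) ≤ 1 := by
    intro ε hε
    obtain ⟨ρ₁, hρ₁, hρ₁lt, hσ₁⟩ := exists_mem_lt hM hy hKy (half_pos hε)
    obtain ⟨s, hspos, hslt, hσ₂⟩ := exists_mem_lt hM hw hdw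
      (by positivity : 0 < d * (ε / 2))
    set ρ₂ : ℝ := s / d with hρ₂def
    have hρ₂pos : 0 < ρ₂ := by positivity
    have hρ₂lt : ρ₂ ≤ 1 + ε / 2 := by
      rw [hρ₂def, div_le_iff₀ hd]
      nlinarith
    have hρtot : 0 < ρ₁ + ρ₂ := by linarith
    refine ⟨ρ₁ + ρ₂, hρtot, by linarith, ?_⟩
    have hcombo := sigma_combo hM hρ₁ hρ₂pos
      (u := fun n => |y n|) (v := fun n => |w n| / d)
      (fun n => abs_nonneg _) (fun n => div_nonneg (abs_nonneg _) hd.le)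
    have hcy : sigmaM M (fun n => |y n| / ρ₁) = sigmaM M (fun n => y n / ρ₁) :=
      sigmaM_congr fun n => by rw [abs_div, abs_div, abs_abs]
    have hvs : sigmaM M (fun n => (|w n| / d) / ρ₂) = sigmaM M (fun n => w n / s) := by
      refine sigmaM_congr fun n => ?_
      have h1 : (|w n| / d) / ρ₂ = |w n| / s := by
        rw [hρ₂def]
        field_simp
      rw [h1, abs_div, abs_div, abs_abs]
    rw [hcy, hvs] at hcombo
    calc sigmaM M (fun n => (|y n| + |w n| / d) / (ρ₁ + ρ₂)) ≤
        ENNReal.ofReal (ρ₁ / (ρ₁ + ρ₂)) * sigmaM M (fun n => y n / ρ₁) +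
        ENNReal.ofReal (ρ₂ / (ρ₁ + ρ₂)) * sigmaM M (fun n => w n / s) := hcombo
      _ ≤ ENNReal.ofReal (ρ₁ / (ρ₁ + ρ₂)) * 1 + ENNReal.ofReal (ρ₂ / (ρ₁ + ρ₂)) * 1 := by
          gcongr
      _ = ENNReal.ofReal (ρ₁ / (ρ₁ + ρ₂)) + ENNReal.ofReal (ρ₂ / (ρ₁ + ρ₂)) := by
          rw [mul_one, mul_one]
      _ = 1 := by
          rw [← ENNReal.ofReal_add (by positivity) (by positivity),
            show ρ₁ / (ρ₁ + ρ₂) + ρ₂ / (ρ₁ + ρ₂) = 1 by field_simp,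
            ENNReal.ofReal_one]
  obtain ⟨ρ, hρ, _, hσ⟩ := key 1 one_pos
  obtain ⟨Ay, hAy⟩ := hy.1
  obtain ⟨Aw, hAw⟩ := hw.1
  constructor
  · refine ⟨⟨Ay + Aw / d, fun n => ?_⟩, ρ, hρ, ne_top_of_le_ne_top ENNReal.one_ne_top hσ⟩
    rw [abs_of_nonneg (add_nonneg (abs_nonneg _) (div_nonneg (abs_nonneg _) hd.le))]
    have h1 : |w n| / d ≤ Aw / d := div_le_div_of_nonneg_right (hAw n) hd.le
    exact add_le_add (hAy n) h1
  · by_contra hcon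
    push_neg at hcon
    obtain ⟨ρ', hρ', hρ'le, hσ'⟩ := key ((luxNorm M (fun n => |y n| + |w n| / d) - (K + 1)) / 2)
      (by linarith)
    have := luxNorm_le_of_mem hρ' hσ'
    linarith

lemma summable_gA (hM : IsOrliczFunction M) (hnd : ∀ t > (0 : ℝ), 0 < M t)
    (hΔ : Delta2Zero M) {a : ℕ → ℝ} {A : ℝ} (hA : ∀ n, |a n| ≤ A)
    {x : ℕ → ℝ} (hx : MemLM M x) : Summable fun n => a n * M |x n| := by
  have hMsum := summable_M hM (sigmaM_ne_top hM hnd hΔ hx)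
  refine Summable.of_norm_bounded (hMsum.mul_left A) fun n => ?_
  rw [Real.norm_eq_abs, abs_mul, abs_of_nonneg (orlicz_nonneg hM (abs_nonneg _))]
  exact mul_le_mul_of_nonneg_right (hA n) (orlicz_nonneg hM (abs_nonneg _))

lemma gA_abs_le (hM : IsOrliczFunction M) (hnd : ∀ t > (0 : ℝ), 0 < M t)
    (hΔ : Delta2Zero M) {a : ℕ → ℝ} (hab : ∃ A : ℝ, ∀ n, |a n| ≤ A)
    {x : ℕ → ℝ} {K : ℝ} (hK : 0 < K) (hx : MemLM M x) (hKx : luxNorm M x ≤ K) :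
    |gA M a x| ≤ (⨆ n, |a n|) * (nuM M K).toReal := by
  obtain ⟨A, hA⟩ := hab
  have hbdd : BddAbove (Set.range fun n => |a n|) :=
    ⟨A, by rintro _ ⟨n, rfl⟩; exact hA n⟩
  set Sa := ⨆ n, |a n| with hSa
  have haS : ∀ n, |a n| ≤ Sa := fun n => le_ciSup hbdd n
  have hS0 : 0 ≤ Sa := (abs_nonneg _).trans (haS 0)
  have hfin := sigmaM_ne_top hM hnd hΔ hx
  have hMsum := summable_M hM hfin
  have habs_sum : Summable fun n => abs (a n * M |x n|) := by
    refine Summable.of_nonneg_of_le (fun n => abs_nonneg _) (fun n => ?_)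
      (hMsum.mul_left Sa)
    rw [abs_mul, abs_of_nonneg (orlicz_nonneg hM (abs_nonneg _))]
    exact mul_le_mul_of_nonneg_right (haS n) (orlicz_nonneg hM (abs_nonneg _))
  have h1 : |gA M a x| ≤ ∑' n, abs (a n * M |x n|) := by
    rw [gA, ← Real.norm_eq_abs]
    refine norm_tsum_le_tsum_norm ?_
    simpa [Real.norm_eq_abs, abs_mul] using habs_sum
  have h2 : (∑' n, abs (a n * M |x n|)) ≤ ∑' n, Sa * M |x n| := by
    refine Summable.tsum_le_tsum (fun n => ?_) habs_sum (hMsum.mul_left Sa)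
    rw [abs_mul, abs_of_nonneg (orlicz_nonneg hM (abs_nonneg _))]
    exact mul_le_mul_of_nonneg_right (haS n) (orlicz_nonneg hM (abs_nonneg _))
  have h3 : (∑' n, Sa * M |x n|) = Sa * (sigmaM M x).toReal := by
    rw [tsum_mul_left, tsum_M_eq hM]
  have h4 : (sigmaM M x).toReal ≤ (nuM M K).toReal :=
    ENNReal.toReal_mono (nuM_ne_top hM hnd hΔ hK) (sigmaM_le_nuM hx hKx)
  calc |gA M a x| ≤ ∑' n, Sa * M |x n| := h1.trans h2
    _ = Sa * (sigmaM M x).toReal := h3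
    _ ≤ Sa * (nuM M K).toReal := mul_le_mul_of_nonneg_left h4 hS0

end Aux

/-- Let `M` be a non-degenerate Orlicz function with `Δ₂` at zero and let `a` be a bounded
sequence. Then `g_a` is real-valued on `ℓ_M`, `|g_a(x)| ≤ ‖a‖_∞ ν(K)` on the ball of
radius `K`, and `g_a` is Lipschitz there with constant `2‖a‖_∞ ν(K+1)`. -/
theorem stmt9 (M : ℝ → ℝ) (hM : IsOrliczFunction M) (hnd : ∀ t > (0 : ℝ), 0 < M t)
    (hΔ : Delta2Zero M) (a : ℕ → ℝ) (hab : ∃ A : ℝ, ∀ n, |a n| ≤ A)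
    (K : ℝ) (hK : 0 < K) :
    (∀ x, MemLM M x → Summable fun n => a n * M |x n|) ∧
    (∀ x, MemLM M x → luxNorm M x ≤ K →
      |gA M a x| ≤ (⨆ n, |a n|) * (nuM M K).toReal) ∧
    (∀ x y, MemLM M x → MemLM M y → luxNorm M x ≤ K → luxNorm M y ≤ K →
      |gA M a x - gA M a y| ≤
        2 * (⨆ n, |a n|) * (nuM M (K + 1)).toReal * luxNorm M (fun n => x n - y n)) := by
  obtain ⟨A, hA⟩ := hab
  have hbdd : BddAbove (Set.range fun n => |a n|) :=
    ⟨A, by rintro _ ⟨n, rfl⟩; exact hA n⟩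
  set Sa := ⨆ n, |a n| with hSa
  have haS : ∀ n, |a n| ≤ Sa := fun n => le_ciSup hbdd n
  have hS0 : 0 ≤ Sa := (abs_nonneg _).trans (haS 0)
  have hν' : nuM M (K + 1) ≠ ⊤ := nuM_ne_top hM hnd hΔ (by linarith)
  have hν'0 : 0 ≤ (nuM M (K + 1)).toReal := ENNReal.toReal_nonneg
  refine ⟨fun x hx => summable_gA hM hnd hΔ hA hx,
    fun x hx hKx => gA_abs_le hM hnd hΔ ⟨A, hA⟩ hK hx hKx,
    fun x y hx hy hKx hKy => ?_⟩
  set w : ℕ → ℝ := fun n => x n - y n with hwdef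
  have hsubmem : MemLM M w := MemLM_sub hM hx hy
  set d := luxNorm M w with hddef
  have hd0 : 0 ≤ d := luxNorm_nonneg
  rcases hd0.eq_or_lt with hd_eq | hdpos
  · -- d = 0 : x = y
    have hw0 : ∀ n, w n = 0 := eq_of_luxNorm_eq_zero hM hsubmem (le_of_eq hd_eq.symm)
    have hxy : x = y := by
      funext n
      have := hw0 n
      rw [hwdef] at this
      simpa [sub_eq_zero] using this
    rw [hxy, sub_self, abs_zero, ← hd_eq, mul_zero]
  · rcases le_or_gt 1 d with hd1 | hd1
    · -- d ≥ 1
      have h1 := gA_abs_le hM hnd hΔ ⟨A, hA⟩ hK hx hKx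
      have h2 := gA_abs_le hM hnd hΔ ⟨A, hA⟩ hK hy hKy
      have hmono : (nuM M K).toReal ≤ (nuM M (K + 1)).toReal :=
        ENNReal.toReal_mono hν' (nuM_mono (by linarith))
      have h3 : |gA M a x - gA M a y| ≤ |gA M a x| + |gA M a y| := abs_sub _ _
      rw [← hSa] at h1 h2
      nlinarith [mul_le_mul_of_nonneg_left hmono hS0,
        mul_le_mul_of_nonneg_left hd1 (mul_nonneg (mul_nonneg (by norm_num : (0:ℝ) ≤ 2) hS0) hν'0)]
    · -- 0 < d < 1
      set z : ℕ → ℝ := fun n => |y n| + |w n| / d with hzdef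
      obtain ⟨hzmem, hznorm⟩ := z_facts hM hy hsubmem hKy hK.le hdpos le_rfl
      have hzfin := sigmaM_ne_top hM hnd hΔ hzmem
      have hz_nu : sigmaM M z ≤ nuM M (K + 1) := sigmaM_le_nuM hzmem hznorm
      have hzsum := summable_M hM hzfin
      have hzn_nonneg : ∀ n, 0 ≤ z n := fun n =>
        add_nonneg (abs_nonneg _) (div_nonneg (abs_nonneg _) hdpos.le)
      have hzabs : ∀ n, |z n| = z n := fun n => abs_of_nonneg (hzn_nonneg n)
      -- pointwise Lipschitz estimate
      have hpt : ∀ n, abs (M |x n| - M |y n|) ≤ d * M |z n| := by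
        intro n
        rw [hzabs n]
        have hwn : w n = x n - y n := by rw [hwdef]
        have hzn : z n = |y n| + |w n| / d := by rw [hzdef]
        have hRHS : 0 ≤ d * M (z n) :=
          mul_nonneg hdpos.le (orlicz_nonneg hM (hzn_nonneg n))
        rcases le_total |y n| |x n| with hcase | hcase
        · have key := conv_step hM (abs_nonneg (y n)) hcase hdpos hd1.le
          have harg : |y n| + (|x n| - |y n|) / d ≤ z n := by
            rw [hzn]
            have : |x n| - |y n| ≤ |w n| := by
              rw [hwn]; exact abs_sub_abs_le_abs_sub _ _
            gcongr
          have hmon : M (|y n| + (|x n| - |y n|) / d) ≤ M (z n) :=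
            hM.monotoneOn
              (Set.mem_Ici.mpr (add_nonneg (abs_nonneg _)
                (div_nonneg (by linarith [hcase] : (0:ℝ) ≤ |x n| - |y n|) hdpos.le)))
              (Set.mem_Ici.mpr (hzn_nonneg n)) harg
          have hmono2 : M |y n| ≤ M |x n| :=
            hM.monotoneOn (Set.mem_Ici.mpr (abs_nonneg _))
              (Set.mem_Ici.mpr (abs_nonneg _)) hcase
          rw [abs_sub_le_iff]
          constructor
          · calc M |x n| - M |y n| ≤ d * M (|y n| + (|x n| - |y n|) / d) := key
              _ ≤ d * M (z n) := mul_le_mul_of_nonneg_left hmon hdpos.le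
          · linarith
        · have key := conv_step hM (abs_nonneg (x n)) hcase hdpos hd1.le
          have harg : |x n| + (|y n| - |x n|) / d ≤ z n := by
            rw [hzn]
            have h5 : |y n| - |x n| ≤ |w n| := by
              rw [hwn, abs_sub_comm]; exact abs_sub_abs_le_abs_sub _ _
            have h6 : (|y n| - |x n|) / d ≤ |w n| / d :=
              div_le_div_of_nonneg_right h5 hdpos.le
            linarith
          have hmon : M (|x n| + (|y n| - |x n|) / d) ≤ M (z n) :=
            hM.monotoneOn
              (Set.mem_Ici.mpr (add_nonneg (abs_nonneg _)
                (div_nonneg (by linarith [hcase] : (0:ℝ) ≤ |y n| - |x n|) hdpos.le)))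
              (Set.mem_Ici.mpr (hzn_nonneg n)) harg
          have hmono2 : M |x n| ≤ M |y n| :=
            hM.monotoneOn (Set.mem_Ici.mpr (abs_nonneg _))
              (Set.mem_Ici.mpr (abs_nonneg _)) hcase
          rw [abs_sub_le_iff]
          constructor
          · linarith
          · calc M |y n| - M |x n| ≤ d * M (|x n| + (|y n| - |x n|) / d) := key
              _ ≤ d * M (z n) := mul_le_mul_of_nonneg_left hmon hdpos.le
      -- summations
      have hsx : Summable fun n => a n * M |x n| := summable_gA hM hnd hΔ hA hx
      have hsy : Summable fun n => a n * M |y n| := summable_gA hM hnd hΔ hA hy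
      have hcs : Summable fun n => a n * M |x n| - a n * M |y n| := hsx.sub hsy
      have hdiff : gA M a x - gA M a y = ∑' n, (a n * M |x n| - a n * M |y n|) := by
        rw [gA, gA, Summable.tsum_sub hsx hsy]
      have hptb : ∀ n, abs (a n * M |x n| - a n * M |y n|) ≤ Sa * (d * M |z n|) := by
        intro n
        rw [← mul_sub, abs_mul]
        exact mul_le_mul (haS n) (hpt n) (abs_nonneg _) hS0
      have hrs : Summable fun n => Sa * (d * M |z n|) := (hzsum.mul_left d).mul_left Sa
      have habs2 : |∑' n, (a n * M |x n| - a n * M |y n|)| ≤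
          ∑' n, abs (a n * M |x n| - a n * M |y n|) := by
        rw [← Real.norm_eq_abs]
        refine norm_tsum_le_tsum_norm ?_
        simpa [Real.norm_eq_abs] using hcs.abs
      have h2 : (∑' n, abs (a n * M |x n| - a n * M |y n|)) ≤ ∑' n, Sa * (d * M |z n|) :=
        Summable.tsum_le_tsum hptb hcs.abs hrs
      have h3 : (∑' n, Sa * (d * M |z n|)) = Sa * (d * (sigmaM M z).toReal) := by
        rw [tsum_mul_left, tsum_mul_left, tsum_M_eq hM]
      have h4 : (sigmaM M z).toReal ≤ (nuM M (K + 1)).toReal :=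
        ENNReal.toReal_mono hν' hz_nu
      have h5 : |gA M a x - gA M a y| ≤ Sa * (d * (sigmaM M z).toReal) := by
        rw [hdiff]
        exact habs2.trans (h2.trans_eq h3)
      have hσ0 : 0 ≤ (sigmaM M z).toReal := ENNReal.toReal_nonneg
      nlinarith [mul_le_mul_of_nonneg_left h4 (mul_nonneg hS0 hdpos.le),
        mul_nonneg (mul_nonneg hS0 hdpos.le) hν'0]
end
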